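/- Let m ≥ 2 and k ≥ 2, and let W_{m+1}^k be the windmill graph obtained by taking k copies of the complete graph K_{m+1} sharing exactly one common vertex (equivalently, the join of a single vertex with the disjoint union of k copies of K_m). Then the spectrum of the eccentricity matrix ε(W_{m+1}^k) consists of the eigenvalue −2m with multiplicity k−1, the eigenvalue 0 with multiplicity k(m−1), and the two simple eigenvalues m(k−1) − √(m²(k−1)² + km) and m(k−1) + √(m²(k−1)² + km). -/

import Mathlib

open Finset Polynomial

noncomputable def ecc {V : Type*} [Fintype V] (G : SimpleGraph V) (u : V) : ℕ :=
  Finset.univ.sup (G.dist u)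

noncomputable def eccMatrix {V : Type*} [Fintype V] (G : SimpleGraph V) :
    Matrix V V ℝ := fun u v =>
  if G.dist u v = min (ecc G u) (ecc G v) then (G.dist u v : ℝ) else 0

theorem eccMatrix_isHermitian {V : Type*} [Fintype V] (G : SimpleGraph V) :
    (eccMatrix G).IsHermitian := by
  unfold Matrix.IsHermitian
  ext u v
  simp only [Matrix.conjTranspose_apply, eccMatrix, star_trivial]
  rw [SimpleGraph.dist_comm, min_comm]

/-- Number of positive eigenvalues (with multiplicity) of a real symmetric matrix. -/
noncomputable def posEigCount {V : Type*} [Fintype V] [DecidableEq V]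
    {A : Matrix V V ℝ} (hA : A.IsHermitian) : ℕ :=
  (Finset.univ.filter fun i => 0 < hA.eigenvalues i).card

/-- The join of two simple graphs: disjoint union plus all edges in between. -/
def graphJoin {α β : Type*} (G : SimpleGraph α) (H : SimpleGraph β) :
    SimpleGraph (α ⊕ β) where
  Adj x y := match x, y with
    | Sum.inl a, Sum.inl b => G.Adj a b
    | Sum.inr a, Sum.inr b => H.Adj a b
    | _, _ => True
  symm := ⟨by rintro (a|a) (b|b) h <;> first | exact G.adj_symm h | exact H.adj_symm h | trivial⟩
  loopless := ⟨by rintro (a|a) h <;> first | exact G.ne_of_adj h rfl | exact H.ne_of_adj h rfl⟩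

/-- The disjoint union of two simple graphs. -/
def graphSum {α β : Type*} (G : SimpleGraph α) (H : SimpleGraph β) :
    SimpleGraph (α ⊕ β) where
  Adj x y := match x, y with
    | Sum.inl a, Sum.inl b => G.Adj a b
    | Sum.inr a, Sum.inr b => H.Adj a b
    | _, _ => False
  symm := ⟨by rintro (a|a) (b|b) h <;> first | exact G.adj_symm h | exact H.adj_symm h | trivial⟩
  loopless := ⟨by rintro (a|a) h <;> first | exact G.ne_of_adj h rfl | exact H.ne_of_adj h rfl⟩

/-- Disjoint union of blocks indexed by `ι`; block `i` has `r i` vertices and is a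
clique when `P i` holds and a coclique (independent set) otherwise. -/
def blocksGraph {ι : Type*} (r : ι → ℕ) (P : ι → Prop) :
    SimpleGraph (Σ i, Fin (r i)) where
  Adj x y := x ≠ y ∧ x.1 = y.1 ∧ P x.1
  symm := ⟨by rintro x y ⟨h1, h2, h3⟩; exact ⟨h1.symm, h2.symm, h2 ▸ h3⟩⟩
  loopless := ⟨fun x h => h.1 rfl⟩

/-!
The eccentricity matrix of the windmill only depends on which blade each vertex lies in (the hub
forming a blade of its own): it is the blow-up `Q (p u) (p v)` of a `(k+1) × (k+1)` matrix `Q`.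
Writing the blow-up as `U Q Uᵀ`, with `U` the indicator matrix of `p`, Sylvester's identity
`X ^ r * χ(A B) = X ^ n * χ(B A)` gives `χ(ε) = X ^ (k(m-1)) * χ(Q UᵀU)`, where
`UᵀU = diag(1, m, …, m)` records the blade sizes. After a shift by `2m`, `Q UᵀU` is itself the
blow-up of `!![2m, m; 1, 2m]` along hub/blade, so the same identity reduces it to the
`2 × 2` matrix `!![2m, km; 1, 2mk]`, whose characteristic polynomial, shifted back, is
`X² - 2m(k-1) X - km`.
-/

namespace Matrix

variable {R ι V : Type*} [CommRing R] [DecidableEq ι]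

def fiberIndicator (p : V → ι) : Matrix V ι R := Matrix.of fun u i => if p u = i then 1 else 0

theorem submatrix_eq_fiberIndicator_mul [Fintype ι] (Q : Matrix ι ι R) (p : V → ι) :
    Q.submatrix p p =
      (fiberIndicator p : Matrix V ι R) * Q * (fiberIndicator p : Matrix V ι R)ᵀ := by
  ext u v
  simp [fiberIndicator, mul_apply]

theorem fiberIndicator_transpose_mul_self [Fintype V] (p : V → ι) :
    (fiberIndicator p : Matrix V ι R)ᵀ * (fiberIndicator p : Matrix V ι R) =
      diagonal fun i => (#{u | p u = i} : R) := by
  ext i j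
  simp only [fiberIndicator, mul_apply, transpose_apply, of_apply, mul_boole, diagonal_apply]
  simp_rw [← ite_and, Finset.sum_boole]
  split_ifs with h
  · subst h; simp only [and_self]
  · rw [Finset.filter_false_of_mem fun u _ hu => h (hu.2.symm.trans hu.1), Finset.card_empty,
      Nat.cast_zero]

theorem charpoly_submatrix_of_card_le [Fintype ι] [Fintype V] [DecidableEq V]
    (Q : Matrix ι ι R) (p : V → ι) (h : Fintype.card ι ≤ Fintype.card V) :
    (Q.submatrix p p).charpoly =
      X ^ (Fintype.card V - Fintype.card ι) *
        (Q * diagonal fun i => (#{u | p u = i} : R)).charpoly := by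
  rw [submatrix_eq_fiberIndicator_mul, Matrix.mul_assoc, charpoly_mul_comm_of_le _ _ h,
    Matrix.mul_assoc, fiberIndicator_transpose_mul_self]

end Matrix

open Matrix

theorem Polynomial.X_sq_sub_C_mul_X_sub_C_eq (a b : ℝ) (h : 0 ≤ a ^ 2 + b) :
    (X ^ 2 - C (2 * a) * X - C b : ℝ[X]) =
      (X - C (a - √(a ^ 2 + b))) * (X - C (a + √(a ^ 2 + b))) := by
  have hprod : (a - √(a ^ 2 + b)) * (a + √(a ^ 2 + b)) = -b := by
    linear_combination -Real.sq_sqrt h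
  calc (X ^ 2 - C (2 * a) * X - C b : ℝ[X])
      = X ^ 2 - C ((a - √(a ^ 2 + b)) + (a + √(a ^ 2 + b))) * X +
          C ((a - √(a ^ 2 + b)) * (a + √(a ^ 2 + b))) := by
        rw [hprod, map_neg]; ring_nf
    _ = (X - C (a - √(a ^ 2 + b))) * (X - C (a + √(a ^ 2 + b))) := by
        simp only [map_add, map_mul]; ring

theorem ecc_eq_of_dist_eq {V : Type*} [Fintype V] {G : SimpleGraph V} {u : V} {n : ℕ}
    (hle : ∀ v, G.dist u v ≤ n) (v : V) (hv : G.dist u v = n) : ecc G u = n :=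
  le_antisymm (Finset.sup_le fun v _ => hle v) (hv ▸ Finset.le_sup (Finset.mem_univ v))

theorem blocksGraph_adj {ι : Type*} {r : ι → ℕ} {P : ι → Prop} {x y : Σ i, Fin (r i)} :
    (blocksGraph r P).Adj x y ↔ x ≠ y ∧ x.1 = y.1 ∧ P x.1 :=
  Iff.rfl

section GraphJoin

variable {α β : Type*} (G : SimpleGraph α) (H : SimpleGraph β)

theorem graphJoin_adj_inl_inr (a : α) (b : β) : (graphJoin G H).Adj (.inl a) (.inr b) :=
  trivial

theorem graphJoin_adj_inr_inr {x y : β} : (graphJoin G H).Adj (.inr x) (.inr y) ↔ H.Adj x y :=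
  Iff.rfl

theorem graphJoin_dist_inl_inr (a : α) (b : β) : (graphJoin G H).dist (.inl a) (.inr b) = 1 :=
  SimpleGraph.dist_eq_one_iff_adj.mpr (graphJoin_adj_inl_inr G H a b)

theorem graphJoin_dist_inr_inr_le (a : α) (x y : β) :
    (graphJoin G H).dist (.inr x) (.inr y) ≤ 2 :=
  SimpleGraph.dist_le <| .cons (graphJoin_adj_inl_inr G H a x).symm <|
    .cons (graphJoin_adj_inl_inr G H a y) .nil

theorem graphJoin_dist_inr_inr_of_not_adj (a : α) {x y : β} (hne : x ≠ y)
    (hxy : ¬ H.Adj x y) : (graphJoin G H).dist (.inr x) (.inr y) = 2 := by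
  have hreach : (graphJoin G H).Reachable (.inr x) (.inr y) :=
    (graphJoin_adj_inl_inr G H a x).symm.reachable.trans
      (graphJoin_adj_inl_inr G H a y).reachable
  have h0 : (graphJoin G H).dist (.inr x) (.inr y) ≠ 0 := by
    rwa [Ne, hreach.dist_eq_zero_iff, Sum.inr.injEq]
  have h1 : (graphJoin G H).dist (.inr x) (.inr y) ≠ 1 := by
    rwa [Ne, SimpleGraph.dist_eq_one_iff_adj, graphJoin_adj_inr_inr]
  have := graphJoin_dist_inr_inr_le G H a x y
  omega

end GraphJoin

abbrev windmill (m k : ℕ) : SimpleGraph (Unit ⊕ Σ _ : Fin k, Fin m) :=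
  graphJoin (⊤ : SimpleGraph Unit) (blocksGraph (fun _ : Fin k => m) (fun _ => True))

def windmillBlade (m k : ℕ) : Unit ⊕ (Σ _ : Fin k, Fin m) → Unit ⊕ Fin k :=
  Sum.map id Sigma.fst

def windmillEccQuotient (k : ℕ) : Matrix (Unit ⊕ Fin k) (Unit ⊕ Fin k) ℝ :=
  fromBlocks 0 (of fun _ _ => 1) (of fun _ _ => 1) (of fun i j => if i = j then 0 else 2)

section Windmill

variable {m k : ℕ}

theorem windmill_dist_inr_inr_of_fst_ne {x y : Σ _ : Fin k, Fin m} (h : x.1 ≠ y.1) :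
    (windmill m k).dist (.inr x) (.inr y) = 2 :=
  graphJoin_dist_inr_inr_of_not_adj _ _ () (fun hxy => h (congrArg Sigma.fst hxy))
    fun hxy => h hxy.2.1

theorem windmill_dist_inr_inr_le_one_of_fst_eq {x y : Σ _ : Fin k, Fin m} (h : x.1 = y.1) :
    (windmill m k).dist (.inr x) (.inr y) ≤ 1 := by
  rcases eq_or_ne x y with rfl | hne
  · simp
  · exact (SimpleGraph.dist_eq_one_iff_adj.mpr
      ((graphJoin_adj_inr_inr _ _).mpr (blocksGraph_adj.mpr ⟨hne, h, trivial⟩))).le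

theorem windmill_ecc_inl (hm : 1 ≤ m) (hk : 1 ≤ k) : ecc (windmill m k) (.inl ()) = 1 := by
  refine ecc_eq_of_dist_eq ?_ (.inr ⟨⟨0, hk⟩, ⟨0, hm⟩⟩) (graphJoin_dist_inl_inr _ _ _ _)
  rintro (_ | x)
  · simp
  · exact (graphJoin_dist_inl_inr _ _ _ _).le

theorem windmill_ecc_inr (hm : 1 ≤ m) (hk : 2 ≤ k) (x : Σ _ : Fin k, Fin m) :
    ecc (windmill m k) (.inr x) = 2 := by
  have : Nontrivial (Fin k) := Fin.nontrivial_iff_two_le.mpr hk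
  obtain ⟨j, hj⟩ := exists_ne x.1
  refine ecc_eq_of_dist_eq ?_ (.inr ⟨j, ⟨0, hm⟩⟩) (windmill_dist_inr_inr_of_fst_ne hj.symm)
  rintro (_ | y)
  · rw [SimpleGraph.dist_comm, graphJoin_dist_inl_inr]; omega
  · exact graphJoin_dist_inr_inr_le _ _ () x y

theorem eccMatrix_windmill (hm : 1 ≤ m) (hk : 2 ≤ k) :
    eccMatrix (windmill m k) =
      (windmillEccQuotient k).submatrix (windmillBlade m k) (windmillBlade m k) := by
  ext (_ | x) (_ | y) <;>
    simp only [eccMatrix, windmillEccQuotient, windmillBlade, submatrix_apply, Sum.map_inl,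
      Sum.map_inr, fromBlocks_apply₁₁, fromBlocks_apply₁₂, fromBlocks_apply₂₁,
      fromBlocks_apply₂₂, of_apply, id, windmill_ecc_inl hm (by omega : 1 ≤ k),
      windmill_ecc_inr hm hk]
  · simp
  · simp [graphJoin_dist_inl_inr]
  · simp [SimpleGraph.dist_comm, graphJoin_dist_inl_inr]
  · rcases eq_or_ne x.1 y.1 with h | h
    · have := windmill_dist_inr_inr_le_one_of_fst_eq h
      simp [h]; omega
    · simp [h, windmill_dist_inr_inr_of_fst_ne h]

theorem card_windmillBlade_fiber :
    (fun a => (#{u | windmillBlade m k u = a} : ℝ)) = Sum.elim (fun _ => 1) fun _ => (m : ℝ) := by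
  ext a
  rw [Finset.card_filter, Fintype.sum_sum_type, Fintype.sum_sigma]
  rcases a with _ | i <;> simp [windmillBlade]

theorem windmillEccQuotient_mul_diagonal_eq_submatrix_sub_scalar :
    windmillEccQuotient k * diagonal (Sum.elim (fun _ => 1) fun _ => (m : ℝ)) =
      (!![2 * (m : ℝ), m; 1, 2 * m]).submatrix (Sum.elim (fun _ => 0) fun _ => 1)
        (Sum.elim (fun _ => 0) fun _ => 1) - scalar _ (2 * (m : ℝ)) := by
  ext (_ | i) (_ | j) <;> simp [windmillEccQuotient]
  rcases eq_or_ne i j with rfl | h <;> simp [*]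

theorem charpoly_windmillEccQuotient_mul_diagonal (hk : 1 ≤ k) :
    (windmillEccQuotient k * diagonal (Sum.elim (fun _ => 1) fun _ => (m : ℝ))).charpoly =
      (X + C (2 * (m : ℝ))) ^ (k - 1) *
        (X ^ 2 - C (2 * ((m : ℝ) * ((k : ℝ) - 1))) * X - C ((k : ℝ) * m)) := by
  have hfiber : (fun a => (#{u | (Sum.elim (fun _ => 0) fun _ => 1 : Unit ⊕ Fin k → Fin 2) u = a}
      : ℝ)) = ![1, (k : ℝ)] := by
    ext a
    rw [Finset.card_filter, Fintype.sum_sum_type]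
    fin_cases a <;> simp
  rw [windmillEccQuotient_mul_diagonal_eq_submatrix_sub_scalar, charpoly_sub_scalar,
    charpoly_submatrix_of_card_le _ _ (by simp; omega), hfiber, charpoly_fin_two]
  simp [trace_fin_two, det_fin_two, vecMul_diagonal]
  rw [show 1 + k - 2 = k - 1 by omega]
  ring

end Windmill

/-- the eccentricity spectrum of the windmill graph `W_{m+1}^k` (the join of a
single vertex with `k` disjoint copies of `K_m`): eigenvalue `-2m` with multiplicity `k-1`,
eigenvalue `0` with multiplicity `k(m-1)`, and the two simple eigenvalues
`m(k-1) ∓ √(m²(k-1)² + km)`, expressed via the characteristic polynomial. -/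
theorem stmt19 (m k : ℕ) (hm : 2 ≤ m) (hk : 2 ≤ k) :
    (eccMatrix (graphJoin (⊤ : SimpleGraph Unit)
        (blocksGraph (fun _ : Fin k => m) (fun _ => True)))).charpoly =
      (X + C (2 * (m : ℝ))) ^ (k - 1) * X ^ (k * (m - 1)) *
        (X - C ((m : ℝ) * ((k : ℝ) - 1) -
          Real.sqrt ((m : ℝ) ^ 2 * ((k : ℝ) - 1) ^ 2 + (k : ℝ) * (m : ℝ)))) *
        (X - C ((m : ℝ) * ((k : ℝ) - 1) +
          Real.sqrt ((m : ℝ) ^ 2 * ((k : ℝ) - 1) ^ 2 + (k : ℝ) * (m : ℝ)))) := by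
  have hcardV : Fintype.card (Unit ⊕ Σ _ : Fin k, Fin m) = 1 + k * m := by simp
  have hcard : Fintype.card (Unit ⊕ Fin k) ≤ Fintype.card (Unit ⊕ Σ _ : Fin k, Fin m) := by
    rw [hcardV, Fintype.card_sum, Fintype.card_unit, Fintype.card_fin]; nlinarith
  have hdim : Fintype.card (Unit ⊕ Σ _ : Fin k, Fin m) - Fintype.card (Unit ⊕ Fin k) =
      k * (m - 1) := by
    rw [hcardV, Fintype.card_sum, Fintype.card_unit, Fintype.card_fin, Nat.mul_sub_one]; omega
  have hquadratic := X_sq_sub_C_mul_X_sub_C_eq ((m : ℝ) * ((k : ℝ) - 1)) ((k : ℝ) * m)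
    (by positivity)
  rw [mul_pow] at hquadratic
  rw [eccMatrix_windmill (by omega) hk, charpoly_submatrix_of_card_le _ _ hcard, hdim,
    card_windmillBlade_fiber, charpoly_windmillEccQuotient_mul_diagonal (by omega), hquadratic]
  ring
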